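/- Let Γ = (V,E) be a finite graph with |V| = n and clique number c(Γ). Define a_r = z_{r+1}(Γ) for r ≥ 1, where z_r(Γ) is the maximum of ∑_{i=1}^r |C_i| over r cliques with empty total intersection. Then the formal power series F(x) = ∑_{r=1}^∞ a_r x^r satisfies (1−x)^2·F(x) = P(x) for an integer polynomial P with P(1) = c(Γ). -/

import Mathlib

/-- The clique number of a finite simple graph: the maximal cardinality of a clique. -/
noncomputable def cliqueNum {V : Type} [Fintype V] (G : SimpleGraph V) : ℕ :=
  sSup {n | ∃ C : Finset V, G.IsClique (C : Set V) ∧ C.card = n}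

/-- `zNum G r` : the maximum of `∑ |C i|` over sequences of `r` cliques with empty
total intersection. -/
noncomputable def zNum {V : Type} [Fintype V] [DecidableEq V] (G : SimpleGraph V) (r : ℕ) : ℕ :=
  sSup {m | ∃ C : Fin r → Finset V, (∀ i, G.IsClique ((C i : Set V))) ∧
    Finset.univ.inf C = ∅ ∧ m = ∑ i, (C i).card}

/-!
For `r ≥ |V|` an optimal family of `r + 1` cliques with empty intersection has a member whose
removal keeps the intersection empty (each vertex is missed by some clique, and `|V| < r + 1`),
so `z_{r+1} ≤ z_r + c`; appending a maximum clique gives the reverse inequality. Hence the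
coefficients of `F` are eventually arithmetic with difference `c`. Since
`(1 - X) · ∑_{k ≥ N} d X^k = d X^N`, multiplying an eventually constant series by `1 - X` gives a
polynomial whose value at `1` is that constant; apply this to the differences of the
coefficients of `F`, whose series is `(1 - X) F` up to the constant term.
-/

open PowerSeries

namespace PowerSeries

variable {R : Type*} [CommRing R]

theorem exists_coe_eq_one_sub_X_mul_mk_of_eventually_eq {b : ℕ → R} {d : R} {N : ℕ}
    (hb : ∀ k ≥ N, b k = d) :
    ∃ P : Polynomial R, (1 - X : PowerSeries R) * mk b = P ∧ P.eval 1 = d := by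
  refine ⟨(1 - Polynomial.X) * (mk b).trunc N + Polynomial.X ^ N * Polynomial.C d, ?_, by simp⟩
  have htail : (mk fun i ↦ coeff (i + N) (mk b)) = C d * mk 1 := by
    ext i
    simp [hb (i + N) (Nat.le_add_left N i)]
  conv_lhs => rw [eq_X_pow_mul_shift_add_trunc N (mk b), htail]
  push_cast
  linear_combination ((X : PowerSeries R) ^ N * C d) * mk_one_mul_one_sub_eq_one R

theorem one_sub_X_mul_mk (a : ℕ → R) :
    (1 - X) * mk a = C (a 0) + X * mk fun k ↦ a (k + 1) - a k := by
  have hsub : (mk fun k ↦ a (k + 1) - a k) = (mk fun k ↦ a (k + 1)) - mk a := by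
    ext k
    simp
  have hshift := eq_X_mul_shift_add_const (mk a)
  simp only [coeff_mk, constantCoeff_mk] at hshift
  rw [hsub]
  linear_combination hshift

theorem exists_coe_eq_one_sub_X_sq_mul_mk_of_eventually_add {a : ℕ → R} {d : R} {N : ℕ}
    (ha : ∀ k ≥ N, a (k + 1) = a k + d) :
    ∃ P : Polynomial R, (1 - X : PowerSeries R) ^ 2 * mk a = P ∧ P.eval 1 = d := by
  obtain ⟨Q, hQ, hQ1⟩ := exists_coe_eq_one_sub_X_mul_mk_of_eventually_eq
    (b := fun k ↦ a (k + 1) - a k) (d := d) (N := N) fun k hk ↦ by simp [ha k hk]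
  refine ⟨(1 - Polynomial.X) * Polynomial.C (a 0) + Polynomial.X * Q, ?_, by simp [hQ1]⟩
  push_cast
  linear_combination (1 - X) * one_sub_X_mul_mk a + X * hQ

end PowerSeries

section Cliques

variable {V : Type} [Fintype V] (G : SimpleGraph V)

theorem bddAbove_clique_cards :
    BddAbove {n | ∃ C : Finset V, G.IsClique (C : Set V) ∧ C.card = n} :=
  ⟨Fintype.card V, by rintro _ ⟨C, -, rfl⟩; exact C.card_le_univ⟩

theorem card_le_cliqueNum {C : Finset V} (hC : G.IsClique (C : Set V)) :
    C.card ≤ cliqueNum G :=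
  le_csSup (bddAbove_clique_cards G) ⟨C, hC, rfl⟩

theorem exists_isClique_card_eq_cliqueNum :
    ∃ C : Finset V, G.IsClique (C : Set V) ∧ C.card = cliqueNum G :=
  Nat.sSup_mem (s := {n | ∃ C : Finset V, G.IsClique (C : Set V) ∧ C.card = n})
    ⟨0, ∅, by simp, rfl⟩ (bddAbove_clique_cards G)

variable [DecidableEq V]

theorem bddAbove_zNum_set (r : ℕ) :
    BddAbove {m | ∃ C : Fin r → Finset V, (∀ i, G.IsClique ((C i : Set V))) ∧
      Finset.univ.inf C = ∅ ∧ m = ∑ i, (C i).card} := by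
  refine ⟨r * Fintype.card V, ?_⟩
  rintro _ ⟨C, -, -, rfl⟩
  simpa using Finset.sum_le_sum fun i (_ : i ∈ Finset.univ) ↦ (C i).card_le_univ

theorem sum_card_le_zNum {r : ℕ} {C : Fin r → Finset V} (hC : ∀ i, G.IsClique ((C i : Set V)))
    (hinf : Finset.univ.inf C = ∅) : ∑ i, (C i).card ≤ zNum G r :=
  le_csSup (bddAbove_zNum_set G r) ⟨C, hC, hinf, rfl⟩

theorem exists_sum_card_eq_zNum {r : ℕ} (hr : 0 < r) :
    ∃ C : Fin r → Finset V, (∀ i, G.IsClique ((C i : Set V))) ∧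
      Finset.univ.inf C = ∅ ∧ zNum G r = ∑ i, (C i).card := by
  have : Nonempty (Fin r) := ⟨⟨0, hr⟩⟩
  refine Nat.sSup_mem ?_ (bddAbove_zNum_set G r)
  exact ⟨0, fun _ ↦ ∅, by simp, Finset.inf_const Finset.univ_nonempty _, by simp⟩

theorem zNum_add_cliqueNum_le {r : ℕ} (hr : 0 < r) :
    zNum G r + cliqueNum G ≤ zNum G (r + 1) := by
  obtain ⟨C, hC, hinf, hsum⟩ := exists_sum_card_eq_zNum G hr
  obtain ⟨D, hD, hDcard⟩ := exists_isClique_card_eq_cliqueNum G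
  set C' : Fin (r + 1) → Finset V := Fin.snoc C D with hC'
  have hsum' : ∑ i, (C' i).card = zNum G r + cliqueNum G := by
    simp [hC', Fin.sum_univ_castSucc, hsum, hDcard]
  have hclique : ∀ i, G.IsClique (C' i : Set V) :=
    Fin.lastCases (by simpa [hC'] using hD) fun k ↦ by simpa [hC'] using hC k
  have hinf' : Finset.univ.inf C' ≤ Finset.univ.inf C := Finset.le_inf fun k _ ↦ by
    simpa [hC'] using Finset.inf_le (f := C') (Finset.mem_univ k.castSucc)
  exact hsum' ▸ sum_card_le_zNum G hclique (Finset.subset_empty.1 (hinf ▸ hinf'))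

theorem zNum_succ_le_of_card_le {r : ℕ} (hr : Fintype.card V ≤ r) :
    zNum G (r + 1) ≤ zNum G r + cliqueNum G := by
  obtain ⟨C, hC, hinf, hsum⟩ := exists_sum_card_eq_zNum G r.succ_pos
  have hmiss : ∀ v, ∃ i, v ∉ C i := by
    simpa [Finset.eq_empty_iff_forall_notMem, Finset.mem_inf] using hinf
  choose f hf using hmiss
  obtain ⟨j, hj⟩ : ∃ j, ∀ v, f v ≠ j := by
    by_contra! hsurj
    replace hsurj : Function.Surjective f := fun j ↦ (hsurj j).imp fun _ ↦ id
    have := Fintype.card_le_of_surjective f hsurj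
    simp at this
    omega
  have hinf' : Finset.univ.inf (fun k ↦ C (j.succAbove k)) = ∅ := by
    refine Finset.eq_empty_of_forall_notMem fun v hv ↦ ?_
    obtain ⟨k, hk⟩ := Fin.exists_succAbove_eq (hj v)
    exact hf v (hk ▸ Finset.mem_inf.1 hv k (Finset.mem_univ k))
  rw [hsum, Fin.sum_univ_succAbove _ j, add_comm]
  exact add_le_add (sum_card_le_zNum G (fun k ↦ hC _) hinf') (card_le_cliqueNum G (hC j))

theorem zNum_succ_of_card_le {r : ℕ} (hr : Fintype.card V ≤ r) (hr0 : 0 < r) :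
    zNum G (r + 1) = zNum G r + cliqueNum G :=
  (zNum_succ_le_of_card_le G hr).antisymm (zNum_add_cliqueNum_le G hr0)

end Cliques

theorem stmt18 {V : Type} [Fintype V] [DecidableEq V] (G : SimpleGraph V) :
    ∃ P : Polynomial ℤ,
      (1 - (PowerSeries.X : PowerSeries ℤ)) ^ 2 *
          PowerSeries.mk (fun r => if r = 0 then 0 else (zNum G (r + 1) : ℤ)) = ↑P ∧
      P.eval 1 = (cliqueNum G : ℤ) := by
  refine exists_coe_eq_one_sub_X_sq_mul_mk_of_eventually_add (N := Fintype.card V + 1) ?_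
  intro k hk
  have hk0 : k ≠ 0 := by omega
  simp only [hk0, k.succ_ne_zero, if_false]
  exact_mod_cast zNum_succ_of_card_le G (r := k + 1) (by omega) k.succ_pos
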